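/- Let F be a linearly ordered field, let A, B, C be magnitudes of F and a, b, c ∈ F, giving cosets α = a + A, β = b + B, γ = c + C. Define the product of cosets by α ⊙ β = {a·b} + a • B + b • A + A * B (and similarly for the other pairs). Then the adapted distributive law holds: α ⊙ β + α ⊙ γ = α ⊙ (β + γ) + (b • A + A * B) + (c • A + A * C), where β + γ is the Minkowski sum (b + c) + (B + C) and A ⊙ β = b • A + A * B, A ⊙ γ = c • A + A * C are the correction terms. -/

import Mathlib

/-!
The correction terms `b • A + A * B` and `c • A + A * C` are additively closed: `b • A` because
`A` is, and `A * B` because in `x₁ * y₁ + x₂ * y₂` with `|x₂| ≤ |x₁|` the second summand can be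
rewritten as `x₁ * y` with `|y| ≤ |y₂|`, hence `y ∈ B` by convexity, so the sum is
`x₁ * (y₁ + y)`. Since the excess terms `(b + c) • A + A * (B + C)` of the right-hand side lie in
the sum of the correction terms and contain `0`, adding them changes nothing; the remaining terms
match by distributivity.
-/

open Pointwise

/-- A *magnitude* of a linearly ordered field `F` is an order-convex additive subgroup of `F`,
given as a set: it contains `0`, is closed under addition and negation, and is order-convex. -/
def IsMagnitude {F : Type*} [Field F] [LinearOrder F] [IsStrictOrderedRing F] (A : Set F) : Prop :=
  (0 : F) ∈ A ∧ (∀ x ∈ A, ∀ y ∈ A, x + y ∈ A) ∧ (∀ x ∈ A, -x ∈ A) ∧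
    (∀ x ∈ A, ∀ y ∈ A, ∀ z : F, x ≤ z → z ≤ y → z ∈ A)

/-- Order relation on subsets of `F`: `S ≤ T` iff every element of `S` is below some element of `T`. -/
def SetLE {F : Type*} [Field F] [LinearOrder F] [IsStrictOrderedRing F] (S T : Set F) : Prop :=
  ∀ x ∈ S, ∃ y ∈ T, x ≤ y

namespace Set

variable {M : Type*} [AddCommMonoid M] {S T : Set M}

theorem add_add_self_subset (hS : S + S ⊆ S) (hT : T + T ⊆ T) : (S + T) + (S + T) ⊆ S + T :=
  calc (S + T) + (S + T) = (S + S) + (T + T) := by abel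
    _ ⊆ S + T := add_subset_add hS hT

theorem add_eq_right_of_subset (hS : S + S ⊆ S) (hTS : T ⊆ S) (hT : 0 ∈ T) : T + S = S :=
  Subset.antisymm ((add_subset_add_right hTS).trans hS) (subset_add_right S hT)

theorem smul_set_add_self_subset {R : Type*} [Monoid R] [DistribMulAction R M]
    (hS : S + S ⊆ S) (r : R) : r • S + r • S ⊆ r • S := by
  rw [← smul_add]
  exact smul_set_mono hS

end Set

namespace IsMagnitude

variable {F : Type*} [Field F] [LinearOrder F] [IsStrictOrderedRing F] {A B : Set F}

theorem zero_mem (hA : IsMagnitude A) : (0 : F) ∈ A := hA.1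

theorem add_mem (hA : IsMagnitude A) {x y : F} (hx : x ∈ A) (hy : y ∈ A) : x + y ∈ A :=
  hA.2.1 x hx y hy

theorem add_self_subset (hA : IsMagnitude A) : A + A ⊆ A := by
  rintro _ ⟨x, hx, y, hy, rfl⟩
  exact hA.add_mem hx hy

theorem mem_of_abs_le (hA : IsMagnitude A) {x y : F} (hy : y ∈ A) (h : |x| ≤ |y|) : x ∈ A := by
  have hbounds : -|y| ∈ A ∧ |y| ∈ A := by
    rcases abs_choice y with h | h <;> rw [h]
    exacts [⟨hA.2.2.1 y hy, hy⟩, ⟨by rwa [neg_neg], hA.2.2.1 y hy⟩]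
  exact hA.2.2.2 _ hbounds.1 _ hbounds.2 x (neg_le_of_abs_le h) (le_of_abs_le h)

theorem mul_mem_smul_of_abs_le (hB : IsMagnitude B) {x t y : F} (hxt : |x| ≤ |t|) (hy : y ∈ B) :
    x * y ∈ t • B := by
  rcases eq_or_ne t 0 with rfl | ht
  · have hx : x = 0 := abs_nonpos_iff.mp (by simpa using hxt)
    exact ⟨y, hy, by simp [hx]⟩
  refine ⟨x * y / t, hB.mem_of_abs_le hy ?_, by simp [smul_eq_mul, mul_div_cancel₀ _ ht]⟩
  rw [abs_div, abs_mul, div_le_iff₀ (abs_pos.mpr ht), mul_comm |y|]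
  exact mul_le_mul_of_nonneg_right hxt (abs_nonneg y)

theorem mul_add_mul_mem (hB : IsMagnitude B) {x₁ x₂ y₁ y₂ : F} (hx₁ : x₁ ∈ A) (hy₁ : y₁ ∈ B)
    (hx₂ : x₂ ∈ A) (hy₂ : y₂ ∈ B) : x₁ * y₁ + x₂ * y₂ ∈ A * B := by
  wlog h : |x₂| ≤ |x₁| generalizing x₁ y₁ x₂ y₂
  · rw [add_comm]
    exact this hx₂ hy₂ hx₁ hy₁ (le_of_not_ge h)
  obtain ⟨y, hy, hxy⟩ := hB.mul_mem_smul_of_abs_le h hy₂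
  refine ⟨x₁, hx₁, y₁ + y, hB.add_mem hy₁ hy, ?_⟩
  simp only [← hxy, smul_eq_mul, mul_add]

theorem mul_add_self_subset (hB : IsMagnitude B) : A * B + A * B ⊆ A * B := by
  rintro _ ⟨_, ⟨x₁, hx₁, y₁, hy₁, rfl⟩, _, ⟨x₂, hx₂, y₂, hy₂, rfl⟩, rfl⟩
  exact hB.mul_add_mul_mem hx₁ hy₁ hx₂ hy₂

end IsMagnitude

theorem adapted_distributivity {F : Type*} [Field F] [LinearOrder F] [IsStrictOrderedRing F]
    (A B C : Set F) (hA : IsMagnitude A) (hB : IsMagnitude B) (hC : IsMagnitude C)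
    (a b c : F) :
    ({a * b} + a • B + b • A + A * B) + ({a * c} + a • C + c • A + A * C) =
      ({a * (b + c)} + a • (B + C) + (b + c) • A + A * (B + C)) +
        (b • A + A * B) + (c • A + A * C) := by
  have hclosed : ((b • A + A * B) + (c • A + A * C)) + ((b • A + A * B) + (c • A + A * C)) ⊆
      (b • A + A * B) + (c • A + A * C) :=
    Set.add_add_self_subset
      (Set.add_add_self_subset (Set.smul_set_add_self_subset hA.add_self_subset b)
        hB.mul_add_self_subset)
      (Set.add_add_self_subset (Set.smul_set_add_self_subset hA.add_self_subset c)
        hC.mul_add_self_subset)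
  have hexcess : (b + c) • A + A * (B + C) ⊆ (b • A + A * B) + (c • A + A * C) :=
    calc (b + c) • A + A * (B + C) ⊆ (b • A + c • A) + (A * B + A * C) :=
          Set.add_subset_add (Set.add_smul_subset b c A) (Set.mul_add_subset A B C)
      _ = (b • A + A * B) + (c • A + A * C) := by abel
  have hzero : (0 : F) ∈ (b + c) • A + A * (B + C) := by
    simpa using Set.add_mem_add (Set.zero_mem_smul_set (a := b + c) hA.zero_mem)
      (Set.mul_mem_mul hA.zero_mem (Set.add_mem_add hB.zero_mem hC.zero_mem))
  calc ({a * b} + a • B + b • A + A * B) + ({a * c} + a • C + c • A + A * C)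
      = {a * b} + {a * c} + (a • B + a • C) + ((b • A + A * B) + (c • A + A * C)) := by abel
    _ = {a * b} + {a * c} + (a • B + a • C) +
          ((b + c) • A + A * (B + C) + ((b • A + A * B) + (c • A + A * C))) := by
        rw [Set.add_eq_right_of_subset hclosed hexcess hzero]
    _ = _ := by rw [mul_add a b c, smul_add a B C, ← Set.singleton_add_singleton]; abel
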